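/- arXiv:1805.11052 — 2 statements merged into one kernel-verified Lean document; each statement's English description precedes it below -/
import Mathlib

section
/- If T is a bounded operator on a Hilbert space H and M is a closed invariant subspace of T, then the multiplicity of the compression of T to the orthogonal complement of M is at most the multiplicity of T, and the multiplicity of T is at most the sum of the multiplicity of the restriction of T to M and the multiplicity of the compression of T to the orthogonal complement of M. -/
/-!
The orthogonal projection `P` onto `Mᗮ` intertwines `T` with its compression `C`:
`P (T v) = C (P v)`, since `T` maps `M = ker P` into itself. Hence the projections of
generators of `T` generate `C`. Conversely, let `E` be the closed `T`-invariant subspace generated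
by generators `x` of `T|_M` together with generators `y` of `C`. The part of `M` lying in `E` is
closed, `T|_M`-invariant and contains `x`, so `M ≤ E`; then the part of `Mᗮ` lying in `E` is
`C`-invariant, because `C z` differs from `T z` by an element of `M`, and it contains `y`,
so `Mᗮ ≤ E` and `E = M ⊔ Mᗮ = ⊤`.
-/

noncomputable section
namespace Paper

variable {H : Type} [NormedAddCommGroup H] [InnerProductSpace ℂ H] [CompleteSpace H]

/-- The smallest closed `T`-invariant subspace containing all the `x i`. -/
def orbitClosure (T : H →L[ℂ] H) {ι : Type} (x : ι → H) : Submodule ℂ H :=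
  (Submodule.span ℂ {y | ∃ (i : ι) (j : ℕ), y = (T ^ j) (x i)}).topologicalClosure

/-- The multiplicity `μ_T`: the minimal number of vectors whose `T`-orbit spans `H`. -/
def multiplicity (T : H →L[ℂ] H) : Cardinal :=
  sInf {c : Cardinal | ∃ (ι : Type) (x : ι → H), orbitClosure T x = ⊤ ∧ c = Cardinal.mk ι}

/-- The restriction `T|_M` of `T` to an invariant subspace `M`. -/
def restrictOp (T : H →L[ℂ] H) (M : Submodule ℂ H) (hM : ∀ x ∈ M, T x ∈ M) :
    M →L[ℂ] M :=
  (T.comp M.subtypeL).codRestrict M fun x => hM x x.2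

/-- The compression `P_{M^⊥} T|_{M^⊥}` of `T` to the orthogonal complement of `M`. -/
def compressOp (T : H →L[ℂ] H) (M : Submodule ℂ H) [CompleteSpace M] :
    Mᗮ →L[ℂ] Mᗮ :=
  (Mᗮ.orthogonalProjectionOnto).comp (T.comp Mᗮ.subtypeL)

section

omit [CompleteSpace H]

theorem mem_orbitClosure (T : H →L[ℂ] H) {ι : Type} (x : ι → H) (i : ι) :
    x i ∈ orbitClosure T x :=
  Submodule.le_topologicalClosure _ (Submodule.subset_span ⟨i, 0, by simp⟩)

theorem apply_mem_orbitClosure (T : H →L[ℂ] H) {ι : Type} (x : ι → H) {v : H}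
    (hv : v ∈ orbitClosure T x) : T v ∈ orbitClosure T x := by
  set S := Submodule.span ℂ {y | ∃ (i : ι) (j : ℕ), y = (T ^ j) (x i)}
  have hS : S.map (T : H →ₗ[ℂ] H) ≤ S := by
    rw [Submodule.map_span_le]
    rintro _ ⟨i, j, rfl⟩
    exact Submodule.subset_span ⟨i, j + 1, by rw [pow_succ']; rfl⟩
  exact Submodule.topologicalClosure_mono hS (Submodule.topologicalClosure_map T S ⟨v, hv, rfl⟩)

theorem orbitClosure_le {T : H →L[ℂ] H} {ι : Type} {x : ι → H} {E : Submodule ℂ H}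
    (hE : IsClosed (E : Set H)) (hTE : ∀ v ∈ E, T v ∈ E) (hxE : ∀ i, x i ∈ E) :
    orbitClosure T x ≤ E := by
  refine Submodule.topologicalClosure_minimal _ ?_ hE
  rw [Submodule.span_le]
  rintro _ ⟨i, j, rfl⟩
  induction j with
  | zero => simpa using hxE i
  | succ j ih => rw [pow_succ']; exact hTE _ ih

theorem eq_top_of_orbitClosure_eq_top {T : H →L[ℂ] H} {ι : Type} {x : ι → H}
    (hx : orbitClosure T x = ⊤) {E : Submodule ℂ H} (hE : IsClosed (E : Set H))
    (hTE : ∀ v ∈ E, T v ∈ E) (hxE : ∀ i, x i ∈ E) : E = ⊤ :=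
  top_le_iff.mp (hx ▸ orbitClosure_le hE hTE hxE)

theorem orbitClosure_id_eq_top (T : H →L[ℂ] H) : orbitClosure T (id : H → H) = ⊤ :=
  eq_top_iff.mpr fun v _ => mem_orbitClosure T id v

theorem multiplicity_le_mk {T : H →L[ℂ] H} {ι : Type} {x : ι → H}
    (hx : orbitClosure T x = ⊤) : multiplicity T ≤ Cardinal.mk ι :=
  csInf_le' ⟨ι, x, hx, rfl⟩

theorem exists_orbitClosure_eq_top_mk_eq_multiplicity (T : H →L[ℂ] H) :
    ∃ (ι : Type) (x : ι → H), orbitClosure T x = ⊤ ∧ Cardinal.mk ι = multiplicity T := by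
  obtain ⟨ι, x, hx, h⟩ := csInf_mem (⟨_, H, id, orbitClosure_id_eq_top T, rfl⟩ :
    {c : Cardinal | ∃ (ι : Type) (x : ι → H), orbitClosure T x = ⊤ ∧ c = Cardinal.mk ι}.Nonempty)
  exact ⟨ι, x, hx, h.symm⟩

section Invariant

variable {T : H →L[ℂ] H} {M : Submodule ℂ H} [CompleteSpace M]

theorem coe_orthogonalProjectionOnto_orthogonal_mem {E : Submodule ℂ H} (hME : M ≤ E) {v : H}
    (hv : v ∈ E) : (Mᗮ.orthogonalProjectionOnto v : H) ∈ E := by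
  rw [← Submodule.starProjection_apply, Submodule.starProjection_orthogonal_val]
  exact sub_mem hv (hME (M.starProjection_apply_mem v))

theorem compressOp_orthogonalProjectionOnto (hM : ∀ x ∈ M, T x ∈ M) (v : H) :
    compressOp T M (Mᗮ.orthogonalProjectionOnto v) = Mᗮ.orthogonalProjectionOnto (T v) := by
  have hv : (Mᗮ.orthogonalProjectionOnto v : H) = v - M.starProjection v := by
    rw [← Submodule.starProjection_apply, Submodule.starProjection_orthogonal_val]
  show Mᗮ.orthogonalProjectionOnto (T (Mᗮ.orthogonalProjectionOnto v)) = _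
  rw [hv, map_sub, map_sub, Submodule.orthogonalProjectionOnto_orthogonal_apply_eq_zero
    (hM _ (M.starProjection_apply_mem v)), sub_zero]

theorem orbitClosure_compressOp_eq_top (hM : ∀ x ∈ M, T x ∈ M) {ι : Type} {x : ι → H}
    (hx : orbitClosure T x = ⊤) :
    orbitClosure (compressOp T M) (fun i => Mᗮ.orthogonalProjectionOnto (x i)) = ⊤ := by
  set G := orbitClosure (compressOp T M) (fun i => Mᗮ.orthogonalProjectionOnto (x i))
  have hPG : G.comap (Mᗮ.orthogonalProjectionOnto : H →ₗ[ℂ] Mᗮ) = ⊤ := by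
    refine eq_top_of_orbitClosure_eq_top hx
      ((Submodule.isClosed_topologicalClosure _).preimage (ContinuousLinearMap.continuous _))
      (fun v hv => ?_) (mem_orbitClosure _ _)
    simpa [compressOp_orthogonalProjectionOnto hM] using apply_mem_orbitClosure _ _ hv
  refine eq_top_iff.mpr fun z _ => ?_
  rw [← Submodule.orthogonalProjectionOnto_mem_subspace_eq_self z]
  exact (Submodule.eq_top_iff'.mp hPG) (z : H)

theorem orbitClosure_sum_elim_eq_top (hM : ∀ x ∈ M, T x ∈ M) {ι κ : Type} {x : ι → M}
    {y : κ → Mᗮ} (hx : orbitClosure (restrictOp T M hM) x = ⊤)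
    (hy : orbitClosure (compressOp T M) y = ⊤) :
    orbitClosure T (Sum.elim (fun i => (x i : H)) fun k => (y k : H)) = ⊤ := by
  set E := orbitClosure T (Sum.elim (fun i => (x i : H)) fun k => (y k : H))
  have hE : IsClosed (E : Set H) := Submodule.isClosed_topologicalClosure _
  have hME : M ≤ E := by
    rw [← Submodule.comap_subtype_eq_top]
    exact eq_top_of_orbitClosure_eq_top hx (hE.preimage continuous_subtype_val)
      (fun z hz => apply_mem_orbitClosure _ _ hz) (fun i => mem_orbitClosure _ _ (Sum.inl i))
  have hMperpE : Mᗮ ≤ E := by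
    rw [← Submodule.comap_subtype_eq_top]
    exact eq_top_of_orbitClosure_eq_top hy (hE.preimage continuous_subtype_val)
      (fun z hz => coe_orthogonalProjectionOnto_orthogonal_mem hME (apply_mem_orbitClosure _ _ hz))
      (fun k => mem_orbitClosure _ _ (Sum.inr k))
  rw [eq_top_iff, ← Submodule.sup_orthogonal_of_hasOrthogonalProjection (K := M)]
  exact sup_le hME hMperpE

end Invariant

end

theorem statement0_general
    (T : H →L[ℂ] H) (M : Submodule ℂ H) (hMclosed : IsClosed (M : Set H))
    (hMinv : ∀ x ∈ M, T x ∈ M) :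
    haveI : CompleteSpace M := hMclosed.completeSpace_coe
    multiplicity (compressOp T M) ≤ multiplicity T ∧
      multiplicity T ≤
        multiplicity (restrictOp T M hMinv) + multiplicity (compressOp T M) := by
  have : CompleteSpace M := hMclosed.completeSpace_coe
  obtain ⟨ι, x, hx, hxT⟩ := exists_orbitClosure_eq_top_mk_eq_multiplicity T
  obtain ⟨ι', x', hx', hxR⟩ :=
    exists_orbitClosure_eq_top_mk_eq_multiplicity (restrictOp T M hMinv)
  obtain ⟨κ, y, hy, hyC⟩ := exists_orbitClosure_eq_top_mk_eq_multiplicity (compressOp T M)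
  constructor
  · exact hxT ▸ multiplicity_le_mk (orbitClosure_compressOp_eq_top hMinv hx)
  · calc multiplicity T ≤ Cardinal.mk (ι' ⊕ κ) :=
          multiplicity_le_mk (orbitClosure_sum_elim_eq_top hMinv hx' hy)
      _ = _ := by rw [Cardinal.mk_sum, Cardinal.lift_id, Cardinal.lift_id, hxR, hyC]

theorem statement0 [TopologicalSpace.SeparableSpace H]
    (T : H →L[ℂ] H) (M : Submodule ℂ H) (hMclosed : IsClosed (M : Set H))
    (hMinv : ∀ x ∈ M, T x ∈ M) :
    haveI : CompleteSpace M := hMclosed.completeSpace_coe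
    multiplicity (compressOp T M) ≤ multiplicity T ∧
      multiplicity T ≤
        multiplicity (restrictOp T M hMinv) + multiplicity (compressOp T M) :=
  statement0_general T M hMclosed hMinv

end Paper
end
end

section
/- For any n ≥ 2 and functions f_1,...,f_n ∈ L^2(T), there exist φ_2,...,φ_n ∈ H∞ such that the essential support of f_1 + Σ_{k=2}^n φ_k f_k equals the union of the essential supports of f_1,...,f_n. -/
/- STATEMENT 5: For `n ≥ 2` and `f_1, ..., f_n ∈ L²(𝕋)` there exist
`φ_2, ..., φ_n ∈ H^∞` such that
`ess supp (f_1 + Σ_{k≥2} φ_k f_k) = ⋃_k ess supp f_k` (up to null sets). -/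

noncomputable section
open MeasureTheory Complex Real
open scoped ENNReal
namespace Paper

instance : Fact (0 < 2 * Real.pi) := ⟨by positivity⟩

abbrev 𝕋c : Type := AddCircle (2 * Real.pi)
abbrev μc : Measure 𝕋c := AddCircle.haarAddCircle

/-- The boundary characterization of `H^∞`: an essentially bounded function on the circle
whose negative Fourier coefficients vanish. -/
def HinfBoundary (g : 𝕋c → ℂ) : Prop :=
  MemLp g ∞ μc ∧ ∀ n : ℤ, 0 < n → ∫ θ, g θ * fourier n θ ∂μc = 0

/-! Take `φ_k` to be the constant `t^(k-1)` for a real `t`. Wherever some `f_k(θ) ≠ 0`, the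
value `f_1(θ) + Σ t^(k-1) f_k(θ)` is a nonzero polynomial in `t`, so it vanishes for only finitely
many `t`. By Fubini, the set of pairs `(θ, t)` where it vanishes although some `f_k(θ) ≠ 0` is
null, so for almost every `t` its section in `θ` is null. -/

open Polynomial in
theorem finite_setOf_sum_pow_mul_eq_zero {R : Type*} [CommRing R] [IsDomain R] {n : ℕ}
    {c : Fin n → R} (hc : c ≠ 0) : {t : R | ∑ k : Fin n, t ^ (k : ℕ) * c k = 0}.Finite := by
  set p : R[X] := ∑ k : Fin n, C (c k) * X ^ (k : ℕ)
  have hcoeff (k : Fin n) : p.coeff k = c k := by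
    simp only [p, finsetSum_coeff, coeff_C_mul_X_pow, Fin.val_inj, Finset.sum_ite_eq,
      Finset.mem_univ, if_true]
  have hp : p ≠ 0 := fun hp => hc (funext fun k => by simp [← hcoeff, hp])
  convert finite_setOfPred_isRoot hp using 2 with t
  simp [p, IsRoot, eval_finsetSum, mul_comm (c _)]

section SumPowMul

variable {α : Type*} [MeasurableSpace α] {μ : Measure α} [SFinite μ] {n : ℕ} {g : Fin n → α → ℂ}

theorem exists_ae_sum_pow_mul_ne_zero_of_measurable (hg : ∀ k, Measurable (g k)) :
    ∃ t : ℝ, ∀ᵐ x ∂μ, (∃ k, g k x ≠ 0) → ∑ k : Fin n, (t : ℂ) ^ (k : ℕ) * g k x ≠ 0 := by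
  have hmeas : MeasurableSet {p : α × ℝ |
      (∃ k, g k p.1 ≠ 0) → ∑ k : Fin n, (p.2 : ℂ) ^ (k : ℕ) * g k p.1 ≠ 0} := by
    measurability
  have hslice : ∀ x, ∀ᵐ t : ℝ,
      (∃ k, g k x ≠ 0) → ∑ k : Fin n, (t : ℂ) ^ (k : ℕ) * g k x ≠ 0 := by
    intro x
    by_cases hx : ∃ k, g k x ≠ 0
    · have hfin := (finite_setOf_sum_pow_mul_eq_zero (c := fun k => g k x)
        (Function.ne_iff.mpr hx)).preimage ofReal_injective.injOn
      filter_upwards [hfin.countable.ae_notMem volume] with t ht using fun _ => ht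
    · exact .of_forall fun _ h => absurd h hx
  exact ((Measure.ae_ae_comm (μ := μ) (ν := volume) hmeas).mp (.of_forall hslice)).exists

theorem exists_ae_sum_pow_mul_ne_zero (hg : ∀ k, AEMeasurable (g k) μ) :
    ∃ t : ℝ, ∀ᵐ x ∂μ, (∃ k, g k x ≠ 0) → ∑ k : Fin n, (t : ℂ) ^ (k : ℕ) * g k x ≠ 0 := by
  obtain ⟨t, ht⟩ :=
    exists_ae_sum_pow_mul_ne_zero_of_measurable (μ := μ) fun k => (hg k).measurable_mk
  refine ⟨t, ?_⟩
  filter_upwards [ht, ae_all_iff.mpr fun k => (hg k).ae_eq_mk] with x hx hmk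
  simpa only [hmk] using hx

end SumPowMul

lemma integral_fourier_eq_zero {m : ℤ} (hm : m ≠ 0) : ∫ θ, fourier m θ ∂μc = 0 :=
  integral_eq_zero_of_add_right_eq_neg (fourier_add_half_inv_index hm (by positivity))

lemma hinfBoundary_const (c : ℂ) : HinfBoundary fun _ => c := by
  refine ⟨memLp_const c, fun m hm => ?_⟩
  rw [integral_const_mul, integral_fourier_eq_zero hm.ne', mul_zero]

theorem statement5 (n : ℕ) (hn : 2 ≤ n) (f : Fin n → (𝕋c → ℂ))
    (hf : ∀ k, MemLp (f k) 2 μc) :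
    ∃ φ : Fin n → (𝕋c → ℂ), (∀ k, HinfBoundary (φ k)) ∧
      ({θ | ∃ k, f k θ ≠ 0} : Set 𝕋c) =ᵐ[μc]
        ({θ | f ⟨0, by omega⟩ θ
            + ∑ k ∈ Finset.univ \ {(⟨0, by omega⟩ : Fin n)}, φ k θ * f k θ ≠ 0} : Set 𝕋c) := by
  obtain ⟨t, ht⟩ :=
    exists_ae_sum_pow_mul_ne_zero fun k => (hf k).aestronglyMeasurable.aemeasurable
  refine ⟨fun k _ => (t : ℂ) ^ (k : ℕ), fun k => hinfBoundary_const _, ?_⟩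
  rw [Filter.eventuallyEq_set]
  filter_upwards [ht] with θ hθ
  have hsum : f ⟨0, by omega⟩ θ + ∑ k ∈ Finset.univ \ {(⟨0, by omega⟩ : Fin n)},
      (t : ℂ) ^ (k : ℕ) * f k θ = ∑ k : Fin n, (t : ℂ) ^ (k : ℕ) * f k θ := by
    rw [Finset.sum_eq_add_sum_sdiff_singleton_of_mem (Finset.mem_univ ⟨0, by omega⟩), pow_zero,
      one_mul]
  simp only [hsum]
  refine ⟨hθ, fun hne => ?_⟩
  by_contra! hzero
  simp [hzero] at hne

end Paper
end
end
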